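/- Let G = (V,E,Ω) be a finite connected graph with V ⊂ ℝⁿ (adjacent vertices distinct as points), Ω ⊆ V nonempty, f : Ω → ℝᵐ, u an extension of f, and x ∈ V \ Ω with S(x) nonempty. Define v by v(y) = u(y) for y ≠ x and v(x) = K(u,S(x))(x), and suppose K(u,S(x))(x) ≠ u(x). Then for every y ∈ V \ Ω one has Lv(y) ≤ max{Lv(x), Lu(y)}. -/

import Mathlib

/-- Local Lipschitz constant of `v` at `x` with respect to the graph with vertex set `V`
and adjacency relation `Adj` (with `sSup ∅ = 0` by the convention of `Real.sSup`). -/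
noncomputable def locLip {n m : ℕ} (V : Finset (EuclideanSpace ℝ (Fin n)))
    (Adj : EuclideanSpace ℝ (Fin n) → EuclideanSpace ℝ (Fin n) → Prop)
    (v : EuclideanSpace ℝ (Fin n) → EuclideanSpace ℝ (Fin m))
    (x : EuclideanSpace ℝ (Fin n)) : ℝ :=
  sSup {r : ℝ | ∃ y ∈ V, Adj x y ∧ r = ‖v y - v x‖ / ‖y - x‖}

/-- `v` is tighter than `u` (max over the empty set is `0`). -/
noncomputable def Tighter {n m : ℕ} (V Ω : Finset (EuclideanSpace ℝ (Fin n)))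
    (Adj : EuclideanSpace ℝ (Fin n) → EuclideanSpace ℝ (Fin n) → Prop)
    (v u : EuclideanSpace ℝ (Fin n) → EuclideanSpace ℝ (Fin m)) : Prop :=
  sSup {r : ℝ | ∃ x ∈ V, x ∉ Ω ∧ locLip V Adj v x < locLip V Adj u x ∧ r = locLip V Adj u x} >
  sSup {r : ℝ | ∃ x ∈ V, x ∉ Ω ∧ locLip V Adj u x < locLip V Adj v x ∧ r = locLip V Adj v x}

/-! `v` differs from `u` only at `x`, so only the slopes of edges at `x` change. By symmetry an
edge `yx` with `y ≠ x` is also an edge `xy`, so its slope is bounded by `Lv(x)`; every other edge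
at `y` keeps its `u`-slope, which is bounded by `Lu(y)`. -/

section locLip

variable {n m : ℕ} {V : Finset (EuclideanSpace ℝ (Fin n))}
  {Adj : EuclideanSpace ℝ (Fin n) → EuclideanSpace ℝ (Fin n) → Prop}
  {u v : EuclideanSpace ℝ (Fin n) → EuclideanSpace ℝ (Fin m)} {x y : EuclideanSpace ℝ (Fin n)}

theorem locLip_nonneg : 0 ≤ locLip V Adj v x :=
  Real.sSup_nonneg <| by
    rintro r ⟨y, -, -, rfl⟩
    positivity

theorem le_locLip (hy : y ∈ V) (hxy : Adj x y) :
    ‖v y - v x‖ / ‖y - x‖ ≤ locLip V Adj v x := by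
  refine le_csSup (Set.Finite.bddAbove ?_) ⟨y, hy, hxy, rfl⟩
  refine (V.finite_toSet.image fun z => ‖v z - v x‖ / ‖z - x‖).subset ?_
  rintro r ⟨z, hz, -, rfl⟩
  exact ⟨z, hz, rfl⟩

theorem locLip_le {c : ℝ} (hc : 0 ≤ c) (h : ∀ y ∈ V, Adj x y → ‖v y - v x‖ / ‖y - x‖ ≤ c) :
    locLip V Adj v x ≤ c :=
  Real.sSup_le (by rintro r ⟨y, hy, hxy, rfl⟩; exact h y hy hxy) hc

theorem locLip_le_max_of_eq_off (hsymm : ∀ a b, Adj a b → Adj b a)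
    (hv : ∀ z, z ≠ x → v z = u z) (hyV : y ∈ V) (hyx : y ≠ x) :
    locLip V Adj v y ≤ max (locLip V Adj v x) (locLip V Adj u y) := by
  refine locLip_le (le_max_of_le_right locLip_nonneg) fun z hzV hyz => ?_
  rcases eq_or_ne z x with rfl | hzx
  · calc ‖v z - v y‖ / ‖z - y‖ = ‖v y - v z‖ / ‖y - z‖ := by
          rw [norm_sub_rev (v z), norm_sub_rev z]
      _ ≤ locLip V Adj v z := le_locLip hyV (hsymm y z hyz)
      _ ≤ _ := le_max_left _ _
  · calc ‖v z - v y‖ / ‖z - y‖ = ‖u z - u y‖ / ‖z - y‖ := by rw [hv z hzx, hv y hyx]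
      _ ≤ locLip V Adj u y := le_locLip hzV hyz
      _ ≤ _ := le_max_right _ _

end locLip

theorem locLip_update_le_max_general (n m : ℕ)
    (V : Finset (EuclideanSpace ℝ (Fin n)))
    (Adj : EuclideanSpace ℝ (Fin n) → EuclideanSpace ℝ (Fin n) → Prop)
    (hsymm : ∀ x y, Adj x y → Adj y x)
    (Ω : Finset (EuclideanSpace ℝ (Fin n)))
    (u : EuclideanSpace ℝ (Fin n) → EuclideanSpace ℝ (Fin m))
    (x : EuclideanSpace ℝ (Fin n))
    (v : EuclideanSpace ℝ (Fin n) → EuclideanSpace ℝ (Fin m))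
    (hv : ∀ y, y ≠ x → v y = u y) :
    ∀ y ∈ V, y ∉ Ω → locLip V Adj v y ≤ max (locLip V Adj v x) (locLip V Adj u y) := by
  intro y hyV _
  rcases eq_or_ne y x with rfl | hyx
  · exact le_max_left _ _
  · exact locLip_le_max_of_eq_off hsymm hv hyV hyx

/-- if `v` is obtained from an extension `u` by replacing its value at a
single vertex `x ∈ V \ Ω` with the Kirszbraun value `K(u, S(x))(x) ≠ u x`, then for every
`y ∈ V \ Ω` one has `Lv(y) ≤ max {Lv(x), Lu(y)}`. -/
theorem locLip_update_le_max (n m : ℕ)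
    (V : Finset (EuclideanSpace ℝ (Fin n)))
    (Adj : EuclideanSpace ℝ (Fin n) → EuclideanSpace ℝ (Fin n) → Prop)
    (hsymm : ∀ x y, Adj x y → Adj y x)
    (hne : ∀ x y, Adj x y → x ≠ y)
    (hconn : ∀ x ∈ V, ∀ y ∈ V,
      Relation.ReflTransGen (fun a b => a ∈ V ∧ b ∈ V ∧ Adj a b) x y)
    (Ω : Finset (EuclideanSpace ℝ (Fin n))) (hΩ : Ω.Nonempty) (hΩV : Ω ⊆ V)
    (f u : EuclideanSpace ℝ (Fin n) → EuclideanSpace ℝ (Fin m))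
    (hu : ∀ z ∈ Ω, u z = f z)
    (x : EuclideanSpace ℝ (Fin n)) (hxV : x ∈ V) (hxΩ : x ∉ Ω)
    (hSx : ∃ y ∈ V, Adj x y)
    (K : EuclideanSpace ℝ (Fin m))
    -- K is the Kirszbraun value of u restricted to S(x) at x, i.e. the minimizer of
    -- y ↦ max_{a ∈ S(x)} ‖u a - y‖ / ‖a - x‖
    (hK : ∀ z : EuclideanSpace ℝ (Fin m),
      sSup {r : ℝ | ∃ a ∈ V, Adj x a ∧ r = ‖u a - K‖ / ‖a - x‖}
        ≤ sSup {r : ℝ | ∃ a ∈ V, Adj x a ∧ r = ‖u a - z‖ / ‖a - x‖})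
    (hKne : K ≠ u x)
    (v : EuclideanSpace ℝ (Fin n) → EuclideanSpace ℝ (Fin m))
    (hvx : v x = K) (hv : ∀ y, y ≠ x → v y = u y) :
    ∀ y ∈ V, y ∉ Ω → locLip V Adj v y ≤ max (locLip V Adj v x) (locLip V Adj u y) :=
  locLip_update_le_max_general n m V Adj hsymm Ω u x v hv
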